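/- Let ρ_t(x) := (2πt)^{−1/2} exp(−x²/(2t)) and ρ_t(x,y) := ρ_t(y − x). For every k ≥ 1, all times 0 ≤ t₀ < t₁ < ⋯ < t_k < t_{k+1} and all x, y ∈ ℝ: ∫_{ℝ^k} ρ_{t₁−t₀}(x,x₁)² · Π_{i=1}^{k−1} ρ_{t_{i+1}−t_i}(x_i,x_{i+1})² · ρ_{t_{k+1}−t_k}(x_k,y)² dx₁⋯dx_k = (1/(2^{k+1} π^{(k+1)/2})) · ρ_{(t_{k+1}−t₀)/2}(x,y) · Π_{i=0}^{k} (t_{i+1} − t_i)^{−1/2}. -/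

import Mathlib

/-!
Squaring a heat kernel halves its time: `ρ_t(z)² = (2√(πt))⁻¹ ρ_{t/2}(z)`. The integrand is
therefore a constant times a chain of heat kernels with all time increments halved, and
integrating out the interior points of such a chain gives `ρ_{(t_{k+1} - t₀)/2}(x, y)` by
iterating the Chapman–Kolmogorov identity `∫ ρ_s(x, z) ρ_t(z, y) dz = ρ_{s+t}(x, y)`. The
iteration runs in `lintegral`, where Tonelli needs no integrability.
-/

noncomputable section

/-- The one-dimensional heat kernel `ρ_t(x) = (2πt)^{-1/2} exp(−x²/(2t))`. -/
def heatK (t x : ℝ) : ℝ :=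
  (Real.sqrt (2 * Real.pi * t))⁻¹ * Real.exp (-x ^ 2 / (2 * t))

/-- Extend a `k`-tuple `X` to a `(k+2)`-tuple with prescribed first value `a`
and last value `b`. -/
def extV {α : Type*} (k : ℕ) (a b : α) (X : Fin k → α) (j : Fin (k + 2)) : α :=
  if _h : (j : ℕ) = 0 then a
  else if _h2 : (j : ℕ) = k + 1 then b
  else X ⟨(j : ℕ) - 1, by have := j.isLt; omega⟩

open MeasureTheory Real ProbabilityTheory
open scoped ENNReal

lemma heatK_nonneg (t x : ℝ) : 0 ≤ heatK t x := by
  unfold heatK; positivity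

@[fun_prop]
lemma continuous_heatK (t : ℝ) : Continuous (heatK t) := by
  unfold heatK; fun_prop

lemma heatK_sub_eq_gaussianPDFReal {t : ℝ} (ht : 0 ≤ t) (m z : ℝ) :
    heatK t (z - m) = gaussianPDFReal m t.toNNReal z := by
  rw [heatK, gaussianPDFReal, Real.coe_toNNReal t ht]

lemma lintegral_heatK_sub {t : ℝ} (ht : 0 < t) (m : ℝ) :
    ∫⁻ z, ENNReal.ofReal (heatK t (z - m)) = 1 := by
  simp_rw [heatK_sub_eq_gaussianPDFReal ht.le]
  exact lintegral_gaussianPDFReal_eq_one m (by simpa using ht)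

lemma heatK_sq {t : ℝ} (ht : 0 < t) (z : ℝ) :
    heatK t z ^ 2 = (2 * √(π * t))⁻¹ * heatK (t / 2) z := by
  have hsqrt : √(2 * π * t) ^ 2 = 2 * √(π * t) * √(2 * π * (t / 2)) := by
    rw [sq_sqrt (by positivity), show 2 * π * (t / 2) = π * t by ring, mul_assoc 2 √(π * t),
      mul_self_sqrt (by positivity), mul_assoc]
  simp only [heatK]
  rw [mul_pow, inv_pow, hsqrt, sq, ← exp_add, mul_inv]
  ring_nf

/-- Completing the square in `z`: the second factor is the Brownian-bridge density of the
position at time `s` of a path from `x` to `y` over time `s + t`. -/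
lemma heatK_mul_heatK {s t : ℝ} (hs : 0 < s) (ht : 0 < t) (x y z : ℝ) :
    heatK s (z - x) * heatK t (y - z) =
      heatK (s + t) (y - x) * heatK (s * t / (s + t)) (z - (t * x + s * y) / (s + t)) := by
  have hsqrt : √(2 * π * s) * √(2 * π * t) =
      √(2 * π * (s + t)) * √(2 * π * (s * t / (s + t))) := by
    rw [← sqrt_mul (by positivity), ← sqrt_mul (by positivity)]
    congr 1
    field_simp
  have hexp : -(z - x) ^ 2 / (2 * s) + -(y - z) ^ 2 / (2 * t) =
      -(y - x) ^ 2 / (2 * (s + t)) +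
        -(z - (t * x + s * y) / (s + t)) ^ 2 / (2 * (s * t / (s + t))) := by
    field_simp
    ring
  simp only [heatK]
  rw [mul_mul_mul_comm, ← mul_inv, hsqrt, ← exp_add, hexp, exp_add, mul_inv]
  ring

theorem lintegral_heatK_mul_heatK {s t : ℝ} (hs : 0 < s) (ht : 0 < t) (x y : ℝ) :
    ∫⁻ z, ENNReal.ofReal (heatK s (z - x)) * ENNReal.ofReal (heatK t (y - z)) =
      ENNReal.ofReal (heatK (s + t) (y - x)) := by
  simp_rw [← ENNReal.ofReal_mul (heatK_nonneg _ _), heatK_mul_heatK hs ht,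
    ENNReal.ofReal_mul (heatK_nonneg _ _)]
  rw [lintegral_const_mul _ (by fun_prop), lintegral_heatK_sub (by positivity), mul_one]

theorem lintegral_fin_succ_cons {α : Type*} [MeasureSpace α] [SigmaFinite (volume : Measure α)]
    {n : ℕ} {f : (Fin (n + 1) → α) → ℝ≥0∞} (hf : Measurable f) :
    ∫⁻ X, f X = ∫⁻ z, ∫⁻ X : Fin n → α, f (Fin.cons z X) := by
  have hmp := (volume_preserving_piFinSuccAbove (fun _ : Fin (n + 1) => α) 0).symm
  rw [← hmp.lintegral_comp hf, Measure.volume_eq_prod, lintegral_prod _ (by fun_prop)]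
  simp [MeasurableEquiv.piFinSuccAbove_symm_apply, Fin.consEquiv]

lemma Fin.sum_univ_succ_sub_castSucc {M : Type*} [AddCommGroup M] {k : ℕ}
    (f : Fin (k + 2) → M) :
    ∑ j : Fin (k + 1), (f j.succ - f j.castSucc) = f (Fin.last (k + 1)) - f 0 := by
  rw [← Fin.succ_last, ← Fin.sum_Iic_sub, ← Fin.top_eq_last, Finset.Iic_top]

lemma extV_zero {α : Type*} (k : ℕ) (a b : α) (X : Fin k → α) : extV k a b X 0 = a := by
  simp [extV]

lemma extV_cons_succ {α : Type*} (k : ℕ) (a b z : α) (X : Fin k → α) (j : Fin (k + 2)) :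
    extV (k + 1) a b (Fin.cons z X) j.succ = extV k z b X j := by
  obtain ⟨j, hj⟩ := j
  rcases j with _ | j
  · simp [extV]
  · simp only [extV, Fin.succ_mk]
    split_ifs <;> first | omega | contradiction | rfl

lemma continuous_extV (k : ℕ) (a b : ℝ) (j : Fin (k + 2)) :
    Continuous fun X : Fin k → ℝ => extV k a b X j := by
  unfold extV
  split_ifs <;> fun_prop

/-- The heat-kernel weight of the path `x → X 0 → ⋯ → X (k-1) → y` with time increments `s`. -/
def heatKChain (k : ℕ) (s : Fin (k + 1) → ℝ) (x y : ℝ) (X : Fin k → ℝ) : ℝ :=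
  ∏ j : Fin (k + 1), heatK (s j) (extV k x y X j.succ - extV k x y X j.castSucc)

lemma heatKChain_nonneg (k : ℕ) (s : Fin (k + 1) → ℝ) (x y : ℝ) (X : Fin k → ℝ) :
    0 ≤ heatKChain k s x y X :=
  Finset.prod_nonneg fun _ _ => heatK_nonneg _ _

lemma measurable_heatKChain (k : ℕ) (s : Fin (k + 1) → ℝ) (x y : ℝ) :
    Measurable (heatKChain k s x y) := by
  have := continuous_extV k x y
  unfold heatKChain
  fun_prop

lemma heatKChain_zero (s : Fin 1 → ℝ) (x y : ℝ) (X : Fin 0 → ℝ) :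
    heatKChain 0 s x y X = heatK (s 0) (y - x) := by
  simp [heatKChain, extV]

lemma heatKChain_cons (k : ℕ) (s : Fin (k + 2) → ℝ) (x y z : ℝ) (X : Fin k → ℝ) :
    heatKChain (k + 1) s x y (Fin.cons z X) =
      heatK (s 0) (z - x) * heatKChain k (Fin.tail s) z y X := by
  rw [heatKChain, heatKChain, Fin.prod_univ_succ]
  refine congrArg₂ (· * ·) ?_ (Finset.prod_congr rfl fun j _ => ?_)
  · rw [extV_cons_succ, Fin.castSucc_zero, extV_zero, extV_zero]
  · rw [← Fin.succ_castSucc, extV_cons_succ, extV_cons_succ, Fin.tail]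

theorem lintegral_heatKChain (k : ℕ) {s : Fin (k + 1) → ℝ} (hs : ∀ j, 0 < s j) (x y : ℝ) :
    ∫⁻ X, ENNReal.ofReal (heatKChain k s x y X) = ENNReal.ofReal (heatK (∑ j, s j) (y - x)) := by
  induction k generalizing x with
  | zero => simp [heatKChain_zero, volume_pi]
  | succ k ih =>
    have htail : 0 < ∑ j, Fin.tail s j :=
      Finset.sum_pos (fun j _ => hs j.succ) Finset.univ_nonempty
    calc ∫⁻ X, ENNReal.ofReal (heatKChain (k + 1) s x y X)
        = ∫⁻ z, ENNReal.ofReal (heatK (s 0) (z - x)) *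
            ∫⁻ X, ENNReal.ofReal (heatKChain k (Fin.tail s) z y X) := by
          rw [lintegral_fin_succ_cons (measurable_heatKChain _ s x y).ennreal_ofReal]
          simp_rw [heatKChain_cons, ENNReal.ofReal_mul (heatK_nonneg _ _)]
          refine lintegral_congr fun z => ?_
          exact lintegral_const_mul _ (measurable_heatKChain _ _ _ _).ennreal_ofReal
      _ = ∫⁻ z, ENNReal.ofReal (heatK (s 0) (z - x)) *
            ENNReal.ofReal (heatK (∑ j, Fin.tail s j) (y - z)) := by
          simp_rw [ih (s := Fin.tail s) fun j => hs j.succ]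
      _ = ENNReal.ofReal (heatK (∑ j, s j) (y - x)) := by
          rw [lintegral_heatK_mul_heatK (hs 0) htail, Fin.sum_univ_succ s]
          rfl

theorem integral_heatKChain (k : ℕ) {s : Fin (k + 1) → ℝ} (hs : ∀ j, 0 < s j) (x y : ℝ) :
    ∫ X, heatKChain k s x y X = heatK (∑ j, s j) (y - x) := by
  rw [integral_eq_lintegral_of_nonneg_ae (.of_forall (heatKChain_nonneg k s x y))
      (measurable_heatKChain k s x y).aestronglyMeasurable,
    lintegral_heatKChain k hs x y, ENNReal.toReal_ofReal (heatK_nonneg _ _)]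

lemma prod_inv_two_mul_sqrt_pi_mul {k : ℕ} (Δ : Fin (k + 1) → ℝ) :
    ∏ j, (2 * √(π * Δ j))⁻¹ =
      ((2 : ℝ) ^ (k + 1) * π ^ (((k : ℝ) + 1) / 2))⁻¹ * ∏ j, (√(Δ j))⁻¹ := by
  have hpi : √π ^ (k + 1) = π ^ (((k : ℝ) + 1) / 2) := by
    rw [sqrt_eq_rpow, ← rpow_mul_natCast pi_pos.le]
    push_cast
    ring_nf
  simp_rw [sqrt_mul pi_pos.le, ← mul_assoc, mul_inv, Finset.prod_mul_distrib, Finset.prod_const,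
    Finset.card_univ, Fintype.card_fin, inv_pow, ← hpi]

theorem squared_heat_kernel_space_integral_general
    (k : ℕ) (τ : Fin (k + 2) → ℝ) (hτ : StrictMono τ)
    (x y : ℝ) :
    (∫ X : Fin k → ℝ, ∏ j : Fin (k + 1),
        (heatK (τ j.succ - τ j.castSucc) (extV k x y X j.succ - extV k x y X j.castSucc)) ^ 2)
      = ((2 : ℝ) ^ (k + 1) * Real.pi ^ (((k : ℝ) + 1) / 2))⁻¹ *
          heatK ((τ (Fin.last (k + 1)) - τ 0) / 2) (y - x) *
          ∏ j : Fin (k + 1), (Real.sqrt (τ j.succ - τ j.castSucc))⁻¹ := by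
  have hΔ : ∀ j : Fin (k + 1), 0 < τ j.succ - τ j.castSucc :=
    fun j => sub_pos.2 (hτ j.castSucc_lt_succ)
  have hsq : ∀ X : Fin k → ℝ, ∏ j : Fin (k + 1),
      heatK (τ j.succ - τ j.castSucc) (extV k x y X j.succ - extV k x y X j.castSucc) ^ 2 =
        (∏ j : Fin (k + 1), (2 * √(π * (τ j.succ - τ j.castSucc)))⁻¹) *
          heatKChain k (fun j => (τ j.succ - τ j.castSucc) / 2) x y X := by
    intro X
    rw [heatKChain, ← Finset.prod_mul_distrib]
    exact Finset.prod_congr rfl fun j _ => heatK_sq (hΔ j) _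
  simp_rw [hsq]
  rw [integral_const_mul, integral_heatKChain k (fun j => half_pos (hΔ j)), ← Finset.sum_div,
    Fin.sum_univ_succ_sub_castSucc, prod_inv_two_mul_sqrt_pi_mul]
  ring

/-- exact evaluation of the Gaussian integral of products of squared heat
kernels over the interior space variables. -/
theorem squared_heat_kernel_space_integral
    (k : ℕ) (hk : 1 ≤ k) (τ : Fin (k + 2) → ℝ) (hτ : StrictMono τ) (h0 : 0 ≤ τ 0)
    (x y : ℝ) :
    (∫ X : Fin k → ℝ, ∏ j : Fin (k + 1),
        (heatK (τ j.succ - τ j.castSucc) (extV k x y X j.succ - extV k x y X j.castSucc)) ^ 2)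
      = ((2 : ℝ) ^ (k + 1) * Real.pi ^ (((k : ℝ) + 1) / 2))⁻¹ *
          heatK ((τ (Fin.last (k + 1)) - τ 0) / 2) (y - x) *
          ∏ j : Fin (k + 1), (Real.sqrt (τ j.succ - τ j.castSucc))⁻¹ :=
  squared_heat_kernel_space_integral_general k τ hτ x y

end
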